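/- Under the assumptions of the previous statement, the scalar ODE u̇ = f_c(u) - f_c(u±) - v∗ has a global, strictly decreasing solution u₀ : ℝ → ℝ with u₀(y) → u_ℓ as y → -∞ and u₀(y) → u_r as y → +∞. -/

import Mathlib

/-!
Integrating `du / F(u) = dy` gives the time map `φ(u) = ∫_c^u dt / F(t)` on `(u_r, u_ℓ)`, which is
strictly decreasing since `F < 0` there, and the solution is its inverse. Because `F` is Lipschitz
and vanishes at the endpoints, `1 / |F(u)| ≥ 1 / (L |u - u_{r,ℓ}|)`, so `φ` diverges logarithmically
at both ends: the endpoints are reached only in infinite time and `φ` maps onto `ℝ`.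
-/

open Filter Set Topology

theorem tendsto_log_sub_nhdsGT (a : ℝ) :
    Tendsto (fun u => Real.log (u - a)) (𝓝[>] a) atBot := by
  have h := (map_subRight_nhdsGT (c := a) (a := a)).le
  rw [sub_self] at h
  exact Real.tendsto_log_nhdsGT_zero.comp h

theorem tendsto_log_sub_nhdsLT (b : ℝ) :
    Tendsto (fun u => Real.log (b - u)) (𝓝[<] b) atBot := by
  have h := (map_subLeft_nhdsLT (c := b) (a := b)).le
  rw [sub_self] at h
  exact Real.tendsto_log_nhdsGT_zero.comp h

theorem hasDerivAt_intervalIntegral_of_continuousOn_Ioo {E : Type*} [NormedAddCommGroup E]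
    [NormedSpace ℝ E] [CompleteSpace E] {f : ℝ → E} {a b c u : ℝ}
    (hf : ContinuousOn f (Ioo a b)) (hc : c ∈ Ioo a b) (hu : u ∈ Ioo a b) :
    HasDerivAt (fun x => ∫ t in c..x, f t) (f u) u :=
  intervalIntegral.integral_hasDerivAt_right
    ((hf.mono (ordConnected_Ioo.uIcc_subset hc hu)).intervalIntegrable)
    (hf.stronglyMeasurableAtFilter isOpen_Ioo u hu) (hf.continuousAt (isOpen_Ioo.mem_nhds hu))

section TimeMap

variable {φ φ' : ℝ → ℝ} {a b c L : ℝ}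

theorem tendsto_atTop_nhdsGT_of_deriv_le_neg_inv (hL : 0 < L) (hac : a < c)
    (hφ : ∀ u ∈ Ioc a c, HasDerivAt φ (φ' u) u)
    (hφ' : ∀ u ∈ Ioc a c, φ' u ≤ -(L * (u - a))⁻¹) :
    Tendsto φ (𝓝[>] a) atTop := by
  set g := fun u => φ u + L⁻¹ * Real.log (u - a)
  have hg' : ∀ u ∈ Ioc a c, HasDerivAt g (φ' u + L⁻¹ * (1 / (u - a))) u := fun u hu =>
    (hφ u hu).add ((((hasDerivAt_id' u).sub_const a).log (sub_pos.2 hu.1).ne').const_mul L⁻¹)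
  have hg : AntitoneOn g (Ioc a c) := by
    refine antitoneOn_of_hasDerivWithinAt_nonpos (convex_Ioc a c)
      (fun u hu => (hg' u hu).continuousAt.continuousWithinAt)
      (fun u hu => (hg' u (interior_subset hu)).hasDerivWithinAt) fun u hu => ?_
    have := hφ' u (interior_subset hu)
    rw [mul_inv] at this
    rw [one_div]
    linarith
  have hlog : Tendsto (fun u => g c - L⁻¹ * Real.log (u - a)) (𝓝[>] a) atTop :=
    tendsto_atTop_add_const_left _ _ (tendsto_neg_atBot_atTop.comp
      ((tendsto_log_sub_nhdsGT a).const_mul_atBot (inv_pos.2 hL)))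
  refine tendsto_atTop_mono' _ ?_ hlog
  filter_upwards [Ioc_mem_nhdsGT hac] with u hu
  have := hg hu ⟨hac, le_rfl⟩ hu.2
  linarith

theorem tendsto_atBot_nhdsLT_of_deriv_le_neg_inv (hL : 0 < L) (hcb : c < b)
    (hφ : ∀ u ∈ Ico c b, HasDerivAt φ (φ' u) u)
    (hφ' : ∀ u ∈ Ico c b, φ' u ≤ -(L * (b - u))⁻¹) :
    Tendsto φ (𝓝[<] b) atBot := by
  set g := fun u => φ u - L⁻¹ * Real.log (b - u)
  have hg' : ∀ u ∈ Ico c b, HasDerivAt g (φ' u - L⁻¹ * (-1 / (b - u))) u := fun u hu =>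
    (hφ u hu).sub ((((hasDerivAt_id' u).const_sub b).log (sub_pos.2 hu.2).ne').const_mul L⁻¹)
  have hg : AntitoneOn g (Ico c b) := by
    refine antitoneOn_of_hasDerivWithinAt_nonpos (convex_Ico c b)
      (fun u hu => (hg' u hu).continuousAt.continuousWithinAt)
      (fun u hu => (hg' u (interior_subset hu)).hasDerivWithinAt) fun u hu => ?_
    have := hφ' u (interior_subset hu)
    rw [mul_inv] at this
    rw [neg_div, one_div]
    linarith
  have hlog : Tendsto (fun u => g c + L⁻¹ * Real.log (b - u)) (𝓝[<] b) atBot :=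
    tendsto_atBot_add_const_left _ _
      ((tendsto_log_sub_nhdsLT b).const_mul_atBot (inv_pos.2 hL))
  refine tendsto_atBot_mono' _ ?_ hlog
  filter_upwards [Ico_mem_nhdsLT hcb] with u hu
  have := hg ⟨le_rfl, hcb⟩ hu hu.1
  linarith

theorem exists_strictAnti_inverse_of_tendsto (hab : a < b)
    (hφ : ∀ u ∈ Ioo a b, HasDerivAt φ (φ' u) u) (hφ' : ∀ u ∈ Ioo a b, φ' u < 0)
    (ha : Tendsto φ (𝓝[>] a) atTop) (hb : Tendsto φ (𝓝[<] b) atBot) :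
    ∃ ψ : ℝ → ℝ, StrictAnti ψ ∧ (∀ y, HasDerivAt ψ (φ' (ψ y))⁻¹ y) ∧
      Tendsto ψ atBot (𝓝 b) ∧ Tendsto ψ atTop (𝓝 a) := by
  have hcont : ContinuousOn φ (Ioo a b) := fun u hu => (hφ u hu).continuousAt.continuousWithinAt
  have hanti : StrictAntiOn φ (Ioo a b) :=
    strictAntiOn_of_hasDerivWithinAt_neg (convex_Ioo a b) hcont
      (fun u hu => (hφ u (interior_subset hu)).hasDerivWithinAt)
      fun u hu => hφ' u (interior_subset hu)
  have hsurj : SurjOn φ (Ioo a b) univ := hcont.surjOn_of_tendsto' (nonempty_Ioo.2 hab)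
    ((tendsto_comp_coe_Ioo_atBot hab).2 ha) ((tendsto_comp_coe_Ioo_atTop hab).2 hb)
  choose ψ hψ_mem hφψ using fun y => hsurj (mem_univ y)
  have hψ : StrictAnti ψ := fun y₁ y₂ h =>
    (hanti.lt_iff_gt (hψ_mem y₁) (hψ_mem y₂)).1 (by rwa [hφψ, hφψ])
  have hrange : range ψ = Ioo a b := by
    refine (range_subset_iff.2 hψ_mem).antisymm fun u hu => ⟨φ u, ?_⟩
    exact hanti.injOn (hψ_mem _) hu (hφψ _)
  -- `ψ` is monotone into `ℝᵒᵈ`, which carries the topology of `ℝ`.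
  have hψ_cont : Continuous ψ := by
    refine continuous_iff_continuousAt.2 fun y => ?_
    exact continuousAt_of_monotoneOn_of_image_mem_nhds (f := fun y => OrderDual.toDual (ψ y))
      (s := univ) (fun _ _ _ _ h => hψ.antitone h) univ_mem
      (by rw [image_univ]; exact hrange ▸ isOpen_Ioo.mem_nhds (hψ_mem y))
  refine ⟨ψ, hψ, fun y => ?_, ?_, ?_⟩
  · exact HasDerivAt.of_local_left_inverse hψ_cont.continuousAt (hφ _ (hψ_mem y))
      (hφ' _ (hψ_mem y)).ne (Eventually.of_forall hφψ)
  · have := tendsto_atBot_ciSup hψ.antitone (hrange ▸ bddAbove_Ioo)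
    rwa [iSup, hrange, csSup_Ioo hab] at this
  · have := tendsto_atTop_ciInf hψ.antitone (hrange ▸ bddBelow_Ioo)
    rwa [iInf, hrange, csInf_Ioo hab] at this

end TimeMap

theorem exists_heteroclinic_of_lipschitzOnWith {F : ℝ → ℝ} {K : NNReal} {a b : ℝ}
    (hF : LipschitzOnWith K F (Icc a b)) (hab : a < b) (ha : F a = 0) (hb : F b = 0)
    (hneg : ∀ u ∈ Ioo a b, F u < 0) :
    ∃ u₀ : ℝ → ℝ, StrictAnti u₀ ∧ (∀ y, HasDerivAt u₀ (F (u₀ y)) y) ∧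
      Tendsto u₀ atBot (𝓝 b) ∧ Tendsto u₀ atTop (𝓝 a) := by
  -- `K` itself may vanish.
  set L : ℝ := K + 1
  have hL : 0 < L := by positivity
  have hinv : ∀ u ∈ Ioo a b, ∀ v ∈ Icc a b, F v = 0 → (F u)⁻¹ ≤ -(L * |u - v|)⁻¹ := by
    intro u hu v hv hFv
    have hlip : -F u ≤ L * |u - v| := calc
      -F u ≤ dist (F u) (F v) := by rw [Real.dist_eq, hFv, sub_zero]; exact neg_le_abs _
      _ ≤ K * dist u v := hF.dist_le_mul u (Ioo_subset_Icc_self hu) v hv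
      _ ≤ L * |u - v| := by rw [Real.dist_eq]; gcongr; linarith
    have := inv_anti₀ (neg_pos.2 (hneg u hu)) hlip
    rwa [inv_neg, le_neg] at this
  obtain ⟨c, hc⟩ := nonempty_Ioo.2 hab
  have hφ : ∀ u ∈ Ioo a b, HasDerivAt (fun x => ∫ t in c..x, (F t)⁻¹) (F u)⁻¹ u :=
    fun u => hasDerivAt_intervalIntegral_of_continuousOn_Ioo
      ((hF.continuousOn.mono Ioo_subset_Icc_self).inv₀ fun t ht => (hneg t ht).ne) hc
  obtain ⟨u₀, hanti, hderiv, hbot, htop⟩ := exists_strictAnti_inverse_of_tendsto hab hφ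
    (fun u hu => inv_lt_zero.2 (hneg u hu))
    (tendsto_atTop_nhdsGT_of_deriv_le_neg_inv hL hc.1
      (fun u hu => hφ u ⟨hu.1, hu.2.trans_lt hc.2⟩) fun u hu => by
        simpa [abs_of_pos (sub_pos.2 hu.1)] using
          hinv u ⟨hu.1, hu.2.trans_lt hc.2⟩ a (left_mem_Icc.2 hab.le) ha)
    (tendsto_atBot_nhdsLT_of_deriv_le_neg_inv hL hc.2
      (fun u hu => hφ u ⟨hc.1.trans_le hu.1, hu.2⟩) fun u hu => by
        simpa [abs_of_neg (sub_neg.2 hu.2)] using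
          hinv u ⟨hc.1.trans_le hu.1, hu.2⟩ b (right_mem_Icc.2 hab.le) hb)
  exact ⟨u₀, hanti, fun y => by simpa using hderiv y, hbot, htop⟩

/-- The layer equation `u̇ = f_c(u) - f_c(u±) - v∗` has a global strictly
decreasing heteroclinic solution from `u_ℓ` to `u_r`. -/
theorem layer_heteroclinic (fc : ℝ → ℝ) (hfc : ContDiff ℝ 1 fc)
    (uP uS vS ur ul : ℝ)
    (hrS : ur < uS) (hSl : uS < ul)
    (hzr : fc ur - fc uP - vS = 0)
    (hzl : fc ul - fc uP - vS = 0)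
    (hneg : ∀ u ∈ Set.Ioo ur ul, fc u - fc uP - vS < 0) :
    ∃ u₀ : ℝ → ℝ, StrictAnti u₀ ∧
      (∀ y, HasDerivAt u₀ (fc (u₀ y) - fc uP - vS) y) ∧
      Tendsto u₀ atBot (nhds ul) ∧ Tendsto u₀ atTop (nhds ur) := by
  obtain ⟨K, hK⟩ := ((hfc.sub contDiff_const).sub contDiff_const).contDiffOn.exists_lipschitzOnWith
    (s := Icc ur ul) one_ne_zero (convex_Icc ur ul) isCompact_Icc
  exact exists_heteroclinic_of_lipschitzOnWith hK (hrS.trans hSl) hzr hzl hneg
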